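/- A linear map T : M_n → M_n is a Schur multiplier (i.e., there exists φ ∈ M_n with T(X)ᵢⱼ = φᵢⱼ Xᵢⱼ for all X) if and only if T(D_x A D_y) = D_x T(A) D_y for all diagonal matrices D_x, D_y and all A ∈ M_n. In that case φᵢⱼ = ⟨T(|i⟩⟨j|) , |i⟩⟨j|⟩ (the (i,j) entry of T(|i⟩⟨j|)). -/

import Mathlib

open scoped BigOperators Kronecker ComplexOrder Matrix

/-- The ℓ²→ℓ² operator norm of a square complex matrix. -/
noncomputable def opNorm {n : Type*} [Fintype n] [DecidableEq n] (A : Matrix n n ℂ) : ℝ :=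
  ‖Matrix.toEuclideanCLM (𝕜 := ℂ) A‖

/-- The square root of a positive semidefinite matrix, as `Matrix.PosSemidef.sqrt` was defined
in the older Mathlib (that declaration has since been removed). -/
noncomputable def Matrix.PosSemidef.sqrt {n : Type*} [Fintype n] [DecidableEq n] {𝕜 : Type*}
    [RCLike 𝕜] {A : Matrix n n 𝕜} (hA : A.PosSemidef) : Matrix n n 𝕜 :=
  hA.1.eigenvectorUnitary.1 * Matrix.diagonal ((↑) ∘ (√·) ∘ hA.1.eigenvalues) *
    (star hA.1.eigenvectorUnitary : Matrix n n 𝕜)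

/-- The trace norm (Schatten-1 norm) of a square complex matrix. -/
noncomputable def traceNorm {n : Type*} [Fintype n] [DecidableEq n] (A : Matrix n n ℂ) : ℝ :=
  ((Matrix.posSemidef_conjTranspose_mul_self A).sqrt.trace).re

/-!
Sandwiching by the diagonal matrix units `Eᵢᵢ = D_{eᵢ}` and `Eⱼⱼ` cuts any matrix down to its
`(i, j)` entry: `Eᵢᵢ X Eⱼⱼ = Xᵢⱼ Eᵢⱼ`, while `(Eᵢᵢ M Eⱼⱼ)ᵢⱼ = Mᵢⱼ`. For a bimodule map `T` this gives
`T(X)ᵢⱼ = (Eᵢᵢ T(X) Eⱼⱼ)ᵢⱼ = T(Eᵢᵢ X Eⱼⱼ)ᵢⱼ = Xᵢⱼ · T(Eᵢⱼ)ᵢⱼ`.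
-/

namespace Matrix

variable {ι R : Type*} [Fintype ι] [DecidableEq ι]

theorem diagonal_mul_mul_diagonal_apply [NonUnitalNonAssocSemiring R] (x y : ι → R)
    (A : Matrix ι ι R) (i j : ι) :
    (diagonal x * A * diagonal y) i j = x i * A i j * y j := by
  rw [mul_diagonal, diagonal_mul]

theorem diagonal_single_mul_mul_diagonal_single [NonAssocSemiring R] (A : Matrix ι ι R)
    (i j : ι) :
    diagonal (Pi.single i 1) * A * diagonal (Pi.single j 1) = single i j (A i j) := by
  rw [diagonal_single, diagonal_single, single_mul_mul_single, one_mul, mul_one]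

theorem map_diagonal_mul_mul_diagonal_of_schur [CommSemiring R]
    (f : Matrix ι ι R → Matrix ι ι R) (φ : Matrix ι ι R) (hf : ∀ X i j, f X i j = φ i j * X i j)
    (x y : ι → R) (A : Matrix ι ι R) :
    f (diagonal x * A * diagonal y) = diagonal x * f A * diagonal y := by
  ext i j
  simp only [hf, diagonal_mul_mul_diagonal_apply]
  ring

theorem apply_eq_mul_of_map_diagonal_mul_mul_diagonal [CommSemiring R]
    (T : Matrix ι ι R →ₗ[R] Matrix ι ι R)
    (hT : ∀ (x y : ι → R) (A : Matrix ι ι R),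
      T (diagonal x * A * diagonal y) = diagonal x * T A * diagonal y)
    (X : Matrix ι ι R) (i j : ι) :
    T X i j = T (single i j 1) i j * X i j :=
  calc T X i j
      = (diagonal (Pi.single i 1) * T X * diagonal (Pi.single j 1) : Matrix ι ι R) i j := by
        rw [diagonal_mul_mul_diagonal_apply, Pi.single_eq_same, Pi.single_eq_same, one_mul,
          mul_one]
    _ = T (single i j (X i j)) i j := by
        rw [← hT, diagonal_single_mul_mul_diagonal_single]
    _ = T (single i j 1) i j * X i j := by
        have hsingle : single i j (X i j) = X i j • single i j 1 := by
          rw [smul_single, smul_eq_mul, mul_one]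
        rw [hsingle, map_smul, smul_apply, smul_eq_mul, mul_comm]

end Matrix

/-- a linear map on `M_n` is a Schur multiplier iff it is a bimodule map over
the diagonal matrices, and then its symbol is given by `φᵢⱼ = (T(|i⟩⟨j|))ᵢⱼ`. -/
theorem schur_multiplier_iff_bimodule {n : ℕ}
    (T : Matrix (Fin n) (Fin n) ℂ →ₗ[ℂ] Matrix (Fin n) (Fin n) ℂ) :
    ((∃ φ : Matrix (Fin n) (Fin n) ℂ, ∀ X i j, (T X) i j = φ i j * X i j) ↔
      (∀ (x y : Fin n → ℂ) (A : Matrix (Fin n) (Fin n) ℂ),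
        T (Matrix.diagonal x * A * Matrix.diagonal y) =
          Matrix.diagonal x * T A * Matrix.diagonal y)) ∧
    ∀ φ : Matrix (Fin n) (Fin n) ℂ, (∀ X i j, (T X) i j = φ i j * X i j) →
      ∀ i j, φ i j = T (Matrix.single i j 1) i j := by
  refine ⟨⟨fun ⟨φ, hφ⟩ => Matrix.map_diagonal_mul_mul_diagonal_of_schur T φ hφ,
    fun hT => ⟨fun i j => T (Matrix.single i j 1) i j,
      Matrix.apply_eq_mul_of_map_diagonal_mul_mul_diagonal T hT⟩⟩, ?_⟩
  intro φ hφ i j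
  rw [hφ, Matrix.single_apply_same, mul_one]
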